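/- arXiv:2401.08928 — 4 statements merged into one kernel-verified Lean document; each statement's English description precedes it below -/
import Mathlib

section
/- Let Λ > 0 and 0 < θ < π, and assume that either Λ > 1, or 0 < Λ ≤ 1 and π − arcsin Λ ≤ θ < π. Then η = 0 is the unique minimizer of f_{θ,Λ} on [0, (π − θ)/2]; in particular κ_Λ(θ) = cos θ. -/
open Real Set

noncomputable section

/-- `f_{θ,Λ}(η) = cos(θ + 2η) + 2Λ sin η`. -/
def fFun (θ Λ η : ℝ) : ℝ := Real.cos (θ + 2 * η) + 2 * Λ * Real.sin η

/-- `κ_Λ(θ) = inf_{η ∈ [0,(π−θ)/2]} f_{θ,Λ}(η)`. -/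
def kappaFun (Λ θ : ℝ) : ℝ := sInf (fFun θ Λ '' Set.Icc 0 ((Real.pi - θ) / 2))

end

lemma fFun_zero (θ Λ : ℝ) : fFun θ Λ 0 = Real.cos θ := by
  simp [fFun]

lemma key_strict (Λ θ : ℝ) (hΛ0 : 0 < Λ) (hθ0 : 0 < θ) (hθπ : θ < Real.pi)
    (h : 1 < Λ ∨ (Λ ≤ 1 ∧ Real.pi - Real.arcsin Λ ≤ θ))
    {η : ℝ} (hη : η ∈ Set.Icc (0 : ℝ) ((Real.pi - θ) / 2)) (hηpos : 0 < η) :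
    fFun θ Λ 0 < fFun θ Λ η := by
  obtain ⟨hη0, hη1⟩ := hη
  have hsin : 0 < Real.sin η := by
    apply Real.sin_pos_of_pos_of_lt_pi hηpos
    nlinarith [Real.pi_pos]
  have hlt : Real.sin (θ + η) < Λ := by
    rcases h with h1 | ⟨hΛ1, hθ1⟩
    · exact lt_of_le_of_lt (Real.sin_le_one _) h1
    · have hx1 : 0 < Real.pi - (θ + η) := by nlinarith
      have hx2 : Real.pi - (θ + η) < Real.arcsin Λ := by linarith
      have : Real.sin (Real.pi - (θ + η)) < Real.sin (Real.arcsin Λ) := by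
        apply Real.strictMonoOn_sin ⟨by linarith [Real.pi_pos], le_of_lt (lt_of_lt_of_le hx2 (Real.arcsin_le_pi_div_two Λ))⟩
          ⟨Real.neg_pi_div_two_le_arcsin Λ, Real.arcsin_le_pi_div_two Λ⟩ hx2
      rw [Real.sin_pi_sub, Real.sin_arcsin (by linarith) hΛ1] at this
      exact this
  have hdiff : fFun θ Λ η - fFun θ Λ 0 = 2 * Real.sin η * (Λ - Real.sin (θ + η)) := by
    simp only [fFun, Real.sin_zero, mul_zero, add_zero]
    have := Real.cos_sub_cos (θ + 2 * η) θ
    have e1 : (θ + 2 * η + θ) / 2 = θ + η := by ring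
    have e2 : (θ + 2 * η - θ) / 2 = η := by ring
    rw [e1, e2] at this
    nlinarith [this]
  nlinarith

lemma key_le (Λ θ : ℝ) (hΛ0 : 0 < Λ) (hθ0 : 0 < θ) (hθπ : θ < Real.pi)
    (h : 1 < Λ ∨ (Λ ≤ 1 ∧ Real.pi - Real.arcsin Λ ≤ θ))
    {η : ℝ} (hη : η ∈ Set.Icc (0 : ℝ) ((Real.pi - θ) / 2)) :
    fFun θ Λ 0 ≤ fFun θ Λ η := by
  rcases eq_or_lt_of_le hη.1 with heq | hpos
  · rw [← heq]
  · exact le_of_lt (key_strict Λ θ hΛ0 hθ0 hθπ h hη hpos)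

theorem stmt8 (Λ θ : ℝ) (hΛ0 : 0 < Λ) (hθ0 : 0 < θ) (hθπ : θ < Real.pi)
    (h : 1 < Λ ∨ (Λ ≤ 1 ∧ Real.pi - Real.arcsin Λ ≤ θ)) :
    ((0 : ℝ) ∈ Set.Icc (0 : ℝ) ((Real.pi - θ) / 2) ∧
      (∀ η ∈ Set.Icc (0 : ℝ) ((Real.pi - θ) / 2), fFun θ Λ 0 ≤ fFun θ Λ η) ∧
      (∀ η ∈ Set.Icc (0 : ℝ) ((Real.pi - θ) / 2),
        (∀ η' ∈ Set.Icc (0 : ℝ) ((Real.pi - θ) / 2), fFun θ Λ η ≤ fFun θ Λ η') → η = 0)) ∧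
    kappaFun Λ θ = Real.cos θ := by
  have hmem : (0 : ℝ) ∈ Set.Icc (0 : ℝ) ((Real.pi - θ) / 2) :=
    ⟨le_refl 0, by linarith⟩
  refine ⟨⟨hmem, fun η hη => key_le Λ θ hΛ0 hθ0 hθπ h hη, ?_⟩, ?_⟩
  · intro η hη hmin
    by_contra hne
    have hpos : 0 < η := lt_of_le_of_ne hη.1 (Ne.symm hne)
    have := key_strict Λ θ hΛ0 hθ0 hθπ h hη hpos
    have := hmin 0 hmem
    linarith
  · have : IsLeast (fFun θ Λ '' Set.Icc 0 ((Real.pi - θ) / 2)) (Real.cos θ) := by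
      constructor
      · exact ⟨0, hmem, fFun_zero θ Λ⟩
      · rintro x ⟨η, hη, rfl⟩
        rw [← fFun_zero θ Λ]
        exact key_le Λ θ hΛ0 hθ0 hθπ h hη
    exact this.csInf_eq
end

section
/- Let 0 < Λ < 1. Then the function κ_Λ is strictly concave on the interval [0, π − arcsin Λ]. -/
open Real Set

/-!
At each `θ`, `κ_Λ` is touched from above by `t ↦ cos φ + 2Λ sin ((φ - t)/2)`, where `φ` is an
optimal value of `θ + 2η`; this majorant is strictly concave in `t` on `[φ - 2π, φ]`. The point is
that the optimum can be taken with `φ ≥ π - arcsin Λ`, so that the majorant is admissible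
(`t ≤ φ ≤ π`) on all of `[0, π - arcsin Λ]`. Indeed `f_{θ,Λ}` decreases while
`sin (θ + 2η) ≥ Λ`, i.e. for `θ + 2η ∈ [arcsin Λ, π - arcsin Λ]`, and when `θ + 2η ≤ π/2` the
reflection `θ + 2η ↦ π - (θ + 2η)` does not increase `f_{θ,Λ}`.
-/

theorem strictConcaveOn_of_forall_exists_majorant {E : Type*} [AddCommMonoid E] [Module ℝ E]
    {s : Set E} {f : E → ℝ} (hs : Convex ℝ s)
    (h : ∀ x ∈ s, ∃ g : E → ℝ, StrictConcaveOn ℝ s g ∧ (∀ y ∈ s, f y ≤ g y) ∧ f x = g x) :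
    StrictConcaveOn ℝ s f := by
  refine ⟨hs, fun x hx y hy hxy a b ha hb hab => ?_⟩
  obtain ⟨g, hg, hfg, hfz⟩ := h _ (hs hx hy ha.le hb.le hab)
  calc a • f x + b • f y ≤ a • g x + b • g y := by
        simp only [smul_eq_mul]
        gcongr
        exacts [hfg x hx, hfg y hy]
    _ < g (a • x + b • y) := hg.2 hx hy hxy ha hb hab
    _ = f (a • x + b • y) := hfz.symm

theorem le_sin_of_mem_Icc_arcsin {Λ u : ℝ} (hΛ0 : 0 ≤ Λ) (hΛ1 : Λ ≤ 1)
    (hu : u ∈ Icc (arcsin Λ) (π - arcsin Λ)) : Λ ≤ sin u := by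
  have hα0 : 0 ≤ arcsin Λ := arcsin_nonneg.2 hΛ0
  have hα1 : arcsin Λ ≤ π / 2 := arcsin_le_pi_div_two Λ
  have hsin : sin (arcsin Λ) = Λ := sin_arcsin (by linarith) hΛ1
  have hα : arcsin Λ ∈ Icc 0 π := ⟨hα0, by linarith⟩
  have hπα : π - arcsin Λ ∈ Icc 0 π := ⟨by linarith, by linarith⟩
  have := strictConcaveOn_sin_Icc.concaveOn.min_le_of_mem_Icc hα hπα hu
  rwa [sin_pi_sub, hsin, min_self] at this

theorem strictConcaveOn_cos_add_mul_sin_half_sub {Λ : ℝ} (hΛ : 0 < Λ) (φ : ℝ) :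
    StrictConcaveOn ℝ (Icc (φ - 2 * π) φ) fun θ => cos φ + 2 * Λ * sin ((φ - θ) / 2) := by
  refine ⟨convex_Icc _ _, fun x hx y hy hxy a b ha hb hab => ?_⟩
  have hmem : ∀ t ∈ Icc (φ - 2 * π) φ, (φ - t) / 2 ∈ Icc 0 π := fun t ht =>
    ⟨by linarith [ht.2], by linarith [ht.1]⟩
  have hne : (φ - x) / 2 ≠ (φ - y) / 2 := fun h => hxy (by linarith)
  have hsin := strictConcaveOn_sin_Icc.2 (hmem x hx) (hmem y hy) hne ha hb hab
  have hmid : a • ((φ - x) / 2) + b • ((φ - y) / 2) = (φ - (a • x + b • y)) / 2 := by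
    simp only [smul_eq_mul]
    linear_combination φ / 2 * hab
  rw [hmid] at hsin
  simp only [smul_eq_mul] at hsin ⊢
  have hcomb : a * (cos φ + 2 * Λ * sin ((φ - x) / 2)) + b * (cos φ + 2 * Λ * sin ((φ - y) / 2))
      = cos φ + 2 * Λ * (a * sin ((φ - x) / 2) + b * sin ((φ - y) / 2)) := by
    linear_combination cos φ * hab
  rw [hcomb]
  gcongr

section fFun

variable {θ Λ : ℝ}

theorem continuous_fFun (θ Λ : ℝ) : Continuous (fFun θ Λ) := by
  unfold fFun
  fun_prop

theorem hasDerivAt_fFun (θ Λ η : ℝ) :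
    HasDerivAt (fFun θ Λ) (-2 * sin (θ + 2 * η) + 2 * Λ * cos η) η := by
  have hlin : HasDerivAt (fun x : ℝ => θ + 2 * x) 2 η := by
    simpa using ((hasDerivAt_id η).const_mul 2).const_add θ
  exact (((hasDerivAt_cos _).comp η hlin).add ((hasDerivAt_sin η).const_mul (2 * Λ))).congr_deriv
    (by ring)

theorem antitoneOn_fFun (hΛ0 : 0 ≤ Λ) (hΛ1 : Λ ≤ 1) :
    AntitoneOn (fFun θ Λ) (Icc ((arcsin Λ - θ) / 2) ((π - arcsin Λ - θ) / 2)) := by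
  refine antitoneOn_of_deriv_nonpos (convex_Icc _ _) (continuous_fFun θ Λ).continuousOn
    (fun x _ => (hasDerivAt_fFun θ Λ x).differentiableAt.differentiableWithinAt) fun x hx => ?_
  rw [interior_Icc] at hx
  have hsin : Λ ≤ sin (θ + 2 * x) :=
    le_sin_of_mem_Icc_arcsin hΛ0 hΛ1 ⟨by linarith [hx.1], by linarith [hx.2]⟩
  rw [(hasDerivAt_fFun θ Λ x).deriv]
  nlinarith [cos_le_one x]

/-- With `θ = π/2 - 2q` and `η = q - p`, the difference of the two sides is
`4 sin p (cos p - Λ cos q)`. -/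
theorem fFun_pi_div_two_sub_sub_le (hθ : 0 ≤ θ) (hΛ1 : Λ ≤ 1) {η : ℝ} (hη0 : 0 ≤ η)
    (hη1 : η ≤ (π / 2 - θ) / 2) : fFun θ Λ (π / 2 - θ - η) ≤ fFun θ Λ η := by
  obtain ⟨q, rfl⟩ : ∃ q, θ = π / 2 - 2 * q := ⟨π / 4 - θ / 2, by ring⟩
  obtain ⟨p, rfl⟩ : ∃ p, η = q - p := ⟨q - η, by ring⟩
  have hp0 : 0 ≤ p := by linarith
  have hpq : p ≤ q := by linarith
  have hq : q ≤ π / 2 := by linarith [pi_pos]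
  have hsinp : 0 ≤ sin p := sin_nonneg_of_nonneg_of_le_pi hp0 (by linarith)
  have hcosq : 0 ≤ cos q := cos_nonneg_of_mem_Icc ⟨by linarith [pi_pos], hq⟩
  have hcos : cos q ≤ cos p := cos_le_cos_of_nonneg_of_le_pi hp0 (by linarith) hpq
  have hdiff : fFun (π / 2 - 2 * q) Λ (q - p)
      - fFun (π / 2 - 2 * q) Λ (π / 2 - (π / 2 - 2 * q) - (q - p))
      = 4 * sin p * (cos p - Λ * cos q) := by
    have e1 : π / 2 - 2 * q + 2 * (q - p) = π / 2 - 2 * p := by ring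
    have e2 : π / 2 - 2 * q + 2 * (π / 2 - (π / 2 - 2 * q) - (q - p)) = π / 2 + 2 * p := by ring
    have e3 : π / 2 - (π / 2 - 2 * q) - (q - p) = q + p := by ring
    rw [fFun, fFun, e1, e2, e3, cos_pi_div_two_sub, cos_add, cos_pi_div_two, sin_pi_div_two,
      sin_two_mul, sin_add, sin_sub]
    ring
  nlinarith [mul_nonneg hsinp (sub_nonneg.2 (mul_le_of_le_one_left hcosq hΛ1)),
    mul_nonneg hsinp (sub_nonneg.2 hcos)]

theorem exists_isLeast_fFun (hΛ0 : 0 ≤ Λ) (hΛ1 : Λ ≤ 1) (hθ0 : 0 ≤ θ)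
    (hθ1 : θ ≤ π - arcsin Λ) :
    ∃ η ∈ Icc ((π - arcsin Λ - θ) / 2) ((π - θ) / 2),
      IsLeast (fFun θ Λ '' Icc 0 ((π - θ) / 2)) (fFun θ Λ η) := by
  have hα0 : 0 ≤ arcsin Λ := arcsin_nonneg.2 hΛ0
  have hα1 := arcsin_le_pi_div_two Λ
  have hcH : (π - arcsin Λ - θ) / 2 ≤ (π - θ) / 2 := by linarith
  obtain ⟨η, hη, hmin⟩ :=
    isCompact_Icc.exists_isMinOn (nonempty_Icc.2 hcH) (continuous_fFun θ Λ).continuousOn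
  have hright : ∀ z ∈ Icc ((arcsin Λ - θ) / 2) ((π - θ) / 2), fFun θ Λ η ≤ fFun θ Λ z := by
    rintro z ⟨hz1, hz2⟩
    rcases le_total ((π - arcsin Λ - θ) / 2) z with hcz | hzc
    · exact hmin ⟨hcz, hz2⟩
    · exact (hmin ⟨le_rfl, by linarith⟩).trans
        (antitoneOn_fFun hΛ0 hΛ1 ⟨hz1, hzc⟩ ⟨by linarith, le_rfl⟩ hzc)
  refine ⟨η, hη, mem_image_of_mem _ ⟨by linarith [hη.1], hη.2⟩, ?_⟩
  rintro _ ⟨z, ⟨hz0, hzH⟩, rfl⟩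
  rcases le_total ((π / 2 - θ) / 2) z with hz | hz
  · exact hright z ⟨by linarith, hzH⟩
  · exact (hright _ ⟨by linarith, by linarith⟩).trans (fFun_pi_div_two_sub_sub_le hθ0 hΛ1 hz0 hz)

end fFun

theorem kappaFun_le (Λ : ℝ) {θ φ : ℝ} (hθφ : θ ≤ φ) (hφ : φ ≤ π) :
    kappaFun Λ θ ≤ cos φ + 2 * Λ * sin ((φ - θ) / 2) := by
  have hmem : (φ - θ) / 2 ∈ Icc 0 ((π - θ) / 2) := ⟨by linarith, by linarith⟩
  have := csInf_le (isCompact_Icc.image (continuous_fFun θ Λ)).bddBelow (mem_image_of_mem _ hmem)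
  rwa [fFun, show θ + 2 * ((φ - θ) / 2) = φ by ring] at this

theorem exists_kappaFun_eq {Λ θ : ℝ} (hΛ0 : 0 ≤ Λ) (hΛ1 : Λ ≤ 1) (hθ0 : 0 ≤ θ)
    (hθ1 : θ ≤ π - arcsin Λ) :
    ∃ φ ∈ Icc (π - arcsin Λ) π, kappaFun Λ θ = cos φ + 2 * Λ * sin ((φ - θ) / 2) := by
  obtain ⟨η, hη, hleast⟩ := exists_isLeast_fFun hΛ0 hΛ1 hθ0 hθ1
  refine ⟨θ + 2 * η, ⟨by linarith [hη.1], by linarith [hη.2]⟩, ?_⟩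
  rw [kappaFun, hleast.csInf_eq, fFun, show (θ + 2 * η - θ) / 2 = η by ring]

theorem stmt11 (Λ : ℝ) (hΛ0 : 0 < Λ) (hΛ1 : Λ < 1) :
    StrictConcaveOn ℝ (Set.Icc 0 (Real.pi - Real.arcsin Λ)) (kappaFun Λ) := by
  refine strictConcaveOn_of_forall_exists_majorant (convex_Icc _ _) fun θ hθ => ?_
  obtain ⟨φ, hφ, hκ⟩ := exists_kappaFun_eq hΛ0.le hΛ1.le hθ.1 hθ.2
  refine ⟨_, (strictConcaveOn_cos_add_mul_sin_half_sub hΛ0 φ).subset ?_ (convex_Icc _ _),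
    fun t ht => kappaFun_le Λ (ht.2.trans hφ.1) hφ.2, hκ⟩
  exact Icc_subset_Icc (by linarith [pi_pos, hφ.2]) hφ.1
end

section
/- Let 0 < Λ < 1. For every θ ∈ (0, π − arcsin Λ), the function κ_Λ is differentiable at θ with (d/dθ) κ_Λ(θ) = −Λ cos(η_Λ(θ)). -/
open Real Set

/-!
If `Λ cos η = sin (θ + 2η)` with `θ + 2η ∈ [π/2, π]`, the identity
`f(η + 2d) - f(η) = 4 sin² d · (-cos (θ + 2η) - Λ sin η - cos (θ + 2η + 2d))` has a nonnegative
bracket on the whole interval, so `η` is the global minimiser and `κ_Λ(θ) = f_{θ,Λ}(η)`.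
Solving the critical equation for `θ` gives `θ = π - 2η - arcsin (Λ cos η)`, whose derivative is
negative when `Λ < 1`; the local inverse `θ ↦ η` is therefore differentiable, and by the envelope
theorem `κ_Λ'(θ) = ∂_θ f_{θ,Λ}(η) = -sin (θ + 2η) = -Λ cos η`.
-/

open Filter Topology

lemma fFun_add_two_mul_sub_fFun {θ Λ η : ℝ} (heq : Λ * cos η = sin (θ + 2 * η)) (d : ℝ) :
    fFun θ Λ (η + 2 * d) - fFun θ Λ η
      = 4 * sin d ^ 2 * (-cos (θ + 2 * η) - Λ * sin η - cos (θ + 2 * η + 2 * d)) := by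
  simp only [fFun, show θ + 2 * (η + 2 * d) = θ + 2 * η + 2 * d + 2 * d by ring]
  generalize θ + 2 * η = A at heq ⊢
  simp only [cos_add, sin_add, cos_two_mul, sin_two_mul, ← heq]
  linear_combination (4 * cos A * cos d ^ 2 - 8 * Λ * cos η * cos d * sin d + 4 * Λ * sin η)
      * sin_sq_add_cos_sq d

lemma isMinOn_fFun_of_critical {θ Λ η : ℝ} (hΛ0 : 0 ≤ Λ) (hΛ1 : Λ ≤ 1)
    (hη0 : 0 ≤ η) (hη : η ≤ π / 2) (hA1 : π / 2 ≤ θ + 2 * η) (hA2 : θ + 2 * η ≤ π)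
    (heq : Λ * cos η = sin (θ + 2 * η)) :
    IsMinOn (fFun θ Λ) (Icc 0 ((π - θ) / 2)) η := by
  have hsη : 0 ≤ sin η := sin_nonneg_of_nonneg_of_le_pi hη0 (by linarith [pi_pos])
  have hcA : cos (θ + 2 * η) ≤ 0 := cos_nonpos_of_pi_div_two_le_of_le hA1 (by linarith)
  have hcA_add : cos (θ + 2 * η) + Λ * sin η ≤ 0 := by
    have hsq : (Λ * sin η) ^ 2 ≤ (-cos (θ + 2 * η)) ^ 2 :=
      calc (Λ * sin η) ^ 2 = Λ ^ 2 - (Λ * cos η) ^ 2 := by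
            linear_combination Λ ^ 2 * sin_sq_add_cos_sq η
        _ ≤ 1 - (Λ * cos η) ^ 2 := by gcongr; exact pow_le_one₀ hΛ0 hΛ1
        _ = (-cos (θ + 2 * η)) ^ 2 := by
            rw [heq]; linear_combination -sin_sq_add_cos_sq (θ + 2 * η)
    linarith [(pow_le_pow_iff_left₀ (mul_nonneg hΛ0 hsη) (by linarith) two_ne_zero).1 hsq]
  have hcos : cos (θ + η) = cos (θ + 2 * η) * cos η + Λ * cos η * sin η := by
    rw [show θ + η = θ + 2 * η - η by ring, cos_sub, heq]
  rw [isMinOn_iff]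
  intro u ⟨hu0, hu⟩
  have hH : 0 ≤ -cos (θ + 2 * η) - Λ * sin η - cos (θ + u + η) := by
    have hmono : cos (θ + u + η) ≤ cos (θ + η) :=
      cos_le_cos_of_nonneg_of_le_pi (by linarith) (by linarith) (by linarith)
    nlinarith [mul_nonneg (neg_nonneg.2 hcA_add) (by linarith [neg_one_le_cos η] : 0 ≤ 1 + cos η)]
  have hdiff := fFun_add_two_mul_sub_fFun heq ((u - η) / 2)
  rw [show η + 2 * ((u - η) / 2) = u by ring,
    show θ + 2 * η + 2 * ((u - η) / 2) = θ + u + η by ring] at hdiff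
  nlinarith [mul_nonneg (sq_nonneg (sin ((u - η) / 2))) hH]

lemma kappaFun_eq_of_isMinOn {Λ θ η : ℝ} (hη : η ∈ Icc 0 ((π - θ) / 2))
    (hmin : IsMinOn (fFun θ Λ) (Icc 0 ((π - θ) / 2)) η) :
    kappaFun Λ θ = fFun θ Λ η :=
  IsLeast.csInf_eq ⟨mem_image_of_mem _ hη, forall_mem_image.2 (isMinOn_iff.1 hmin)⟩

/-- The `θ` for which `η` is a critical point of `fFun θ Λ` on the branch
`θ + 2η ∈ [π/2, π]`: solve `Λ cos η = sin (θ + 2η)` for `θ`. -/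
noncomputable def criticalTheta (Λ η : ℝ) : ℝ := π - 2 * η - arcsin (Λ * cos η)

lemma criticalTheta_eq_iff {Λ η θ : ℝ} (hΛ0 : 0 ≤ Λ) (hΛ1 : Λ ≤ 1) (hcη : 0 ≤ cos η) :
    criticalTheta Λ η = θ ↔
      Λ * cos η = sin (θ + 2 * η) ∧ π / 2 ≤ θ + 2 * η ∧ θ + 2 * η ≤ π := by
  have hx0 : 0 ≤ Λ * cos η := mul_nonneg hΛ0 hcη
  have hx1 : Λ * cos η ≤ 1 := mul_le_one₀ hΛ1 hcη (cos_le_one η)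
  constructor
  · rintro rfl
    have hA : criticalTheta Λ η + 2 * η = π - arcsin (Λ * cos η) := by
      rw [criticalTheta]; ring
    rw [hA, sin_pi_sub, sin_arcsin (by linarith) hx1]
    exact ⟨rfl, by linarith [arcsin_le_pi_div_two (Λ * cos η)],
      by linarith [arcsin_nonneg.2 hx0]⟩
  · rintro ⟨heq, hA1, hA2⟩
    rw [criticalTheta, heq, ← sin_pi_sub, arcsin_sin (by linarith [pi_pos]) (by linarith)]
    ring

lemma hasStrictDerivAt_criticalTheta {Λ : ℝ} (hΛ : |Λ| < 1) (x : ℝ) :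
    HasStrictDerivAt (criticalTheta Λ) (-2 + Λ * sin x / √(1 - (Λ * cos x) ^ 2)) x := by
  have hx : |Λ * cos x| < 1 := by
    rw [abs_mul]; exact mul_lt_one_of_nonneg_of_lt_one_left (abs_nonneg _) hΛ (abs_cos_le_one x)
  have harcsin := (hasStrictDerivAt_arcsin (abs_lt.1 hx).1.ne' (abs_lt.1 hx).2.ne).comp x
    ((hasStrictDerivAt_cos x).const_mul Λ)
  have hlin := ((hasStrictDerivAt_id x).const_mul 2).const_sub π
  exact (hlin.sub harcsin).congr_deriv (by ring)

lemma criticalTheta_deriv_neg {Λ : ℝ} (hΛ : |Λ| < 1) (x : ℝ) :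
    -2 + Λ * sin x / √(1 - (Λ * cos x) ^ 2) < 0 := by
  have hsq : (Λ * sin x) ^ 2 < 1 - (Λ * cos x) ^ 2 := by
    have hΛsq : Λ ^ 2 < 1 := by rwa [sq_lt_one_iff_abs_lt_one]
    linear_combination hΛsq + Λ ^ 2 * sin_sq_add_cos_sq x
  have hpos : 0 < √(1 - (Λ * cos x) ^ 2) := sqrt_pos.2 (by linarith [sq_nonneg (Λ * sin x)])
  linarith [(div_lt_one hpos).2 (lt_sqrt_of_sq_lt hsq)]

lemma kappaFun_eq_fFun_of_criticalTheta_eq {Λ θ η : ℝ} (hΛ0 : 0 ≤ Λ) (hΛ1 : Λ ≤ 1)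
    (hη : η ∈ Icc 0 (π / 2)) (hθ : criticalTheta Λ η = θ) :
    kappaFun Λ θ = fFun θ Λ η := by
  obtain ⟨heq, hA1, hA2⟩ :=
    (criticalTheta_eq_iff hΛ0 hΛ1 (cos_nonneg_of_mem_Icc ⟨by linarith [hη.1, pi_pos], hη.2⟩)).1 hθ
  exact kappaFun_eq_of_isMinOn ⟨hη.1, by linarith⟩
    (isMinOn_fFun_of_critical hΛ0 hΛ1 hη.1 hη.2 hA1 hA2 heq)

/-- Envelope theorem: at a critical point the `η`-derivative of `fFun` vanishes, so only the
partial derivative `-sin (θ + 2η)` in `θ` survives. -/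
lemma hasDerivAt_fFun_comp {Λ θ n : ℝ} {N : ℝ → ℝ} (hN : HasDerivAt N n θ)
    (heq : Λ * cos (N θ) = sin (θ + 2 * N θ)) :
    HasDerivAt (fun y => fFun y Λ (N y)) (-(Λ * cos (N θ))) θ := by
  have hcos := ((hasDerivAt_id' θ).fun_add (hN.const_mul 2)).cos
  have hsin := hN.sin.const_mul (2 * Λ)
  refine (hcos.add hsin).congr_deriv ?_
  rw [← heq]
  ring

theorem stmt12 (Λ θ η : ℝ) (hΛ0 : 0 < Λ) (hΛ1 : Λ < 1)
    (hθ0 : 0 < θ) (hθ : θ < Real.pi - Real.arcsin Λ)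
    (hη : η ∈ Set.Icc (max 0 (Real.pi / 2 - θ)) ((Real.pi - θ) / 2))
    (heq : Λ * Real.cos η = Real.sin (θ + 2 * η)) :
    HasDerivAt (kappaFun Λ) (-(Λ * Real.cos η)) θ := by
  obtain ⟨⟨hη0, hA1⟩, hA2⟩ : (0 ≤ η ∧ π / 2 ≤ θ + 2 * η) ∧ θ + 2 * η ≤ π := by
    rw [mem_Icc, max_le_iff] at hη; exact ⟨⟨hη.1.1, by linarith⟩, by linarith⟩
  have hΛ : |Λ| < 1 := by rwa [abs_of_pos hΛ0]
  have hcη : 0 ≤ cos η := cos_nonneg_of_mem_Icc ⟨by linarith [pi_pos], by linarith⟩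
  have hTη : criticalTheta Λ η = θ := (criticalTheta_eq_iff hΛ0.le hΛ1.le hcη).2 ⟨heq, hA1, hA2⟩
  have hη_mem : η ∈ Ioo 0 (π / 2) := by
    refine ⟨hη0.lt_of_ne ?_, by linarith⟩
    rintro rfl
    rw [criticalTheta, mul_zero, cos_zero, mul_one] at hTη
    linarith
  have hT := hasStrictDerivAt_criticalTheta hΛ η
  have hT' := (criticalTheta_deriv_neg hΛ η).ne
  set N := hT.localInverse _ _ _ hT'
  have hNθ : N θ = η := hTη ▸ (hT.eventually_left_inverse hT').self_of_nhds
  have hN : HasDerivAt N _ θ := hTη ▸ (hT.to_localInverse hT').hasDerivAt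
  have hkappa : kappaFun Λ =ᶠ[𝓝 θ] fun y => fFun y Λ (N y) := by
    have hN_mem : ∀ᶠ y in 𝓝 θ, N y ∈ Ioo 0 (π / 2) :=
      hN.continuousAt.preimage_mem_nhds (hNθ ▸ Ioo_mem_nhds hη_mem.1 hη_mem.2)
    filter_upwards [hTη ▸ hT.eventually_right_inverse hT', hN_mem] with y hy hNy
    exact kappaFun_eq_fFun_of_criticalTheta_eq hΛ0.le hΛ1.le (Ioo_subset_Icc_self hNy) hy
  have hf := hasDerivAt_fFun_comp hN (hNθ ▸ heq)
  rw [hNθ] at hf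
  exact hf.congr_of_eventuallyEq hkappa
end

section
/- Let 0 < Λ ≤ 1 and 0 < θ < π − arcsin Λ. Then 1 + κ_Λ(θ) ≥ 2Λ cos((θ + arcsin Λ)/2). -/
open Real Set

/-! Put `a = arcsin Λ` and `u = π - θ - 2η ∈ [0, π]`, so that `1 + f(η) = 1 - cos u + 2 sin a sin η`
and the bound reads `2 sin a sin ((π - θ - a)/2)`. If `u ≤ a` this follows from monotonicity of
`sin` on `[-π/2, π/2]`. If `u > a`, sine being 1-Lipschitz reduces it to
`sin a · (u - a) ≤ 1 - cos u` on `[a, π]`. The right side minus the left is increasing on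
`[a, π - a]` and decreasing on `[π - a, π]` (its derivative is `sin u - sin a`), so it suffices to
check `u = a` and `u = π`; the latter is `sin a · (π - a) ≤ 2`, which follows from
`(π/2 - a) sin a ≤ cos a` and `cos a + (π/2) sin a ≤ √(1 + π²/4) < 2`. -/

theorem mul_sub_le_cos_sub_cos {m a b : ℝ} (hab : a ≤ b) (h : ∀ x ∈ Ioo a b, m ≤ sin x) :
    m * (b - a) ≤ cos a - cos b := by
  have := (convex_Icc a b).mul_sub_le_image_sub_of_le_deriv (f := fun x => -cos x)
    (by fun_prop) (by fun_prop) (C := m) (by simpa using h) a (left_mem_Icc.2 hab) b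
    (right_mem_Icc.2 hab) hab
  linarith

theorem cos_sub_cos_le_mul_sub {M a b : ℝ} (hab : a ≤ b) (h : ∀ x ∈ Ioo a b, sin x ≤ M) :
    cos a - cos b ≤ M * (b - a) := by
  have := (convex_Icc a b).image_sub_le_mul_sub_of_deriv_le (f := fun x => -cos x)
    (by fun_prop) (by fun_prop) (C := M) (by simpa using h) a (left_mem_Icc.2 hab) b
    (right_mem_Icc.2 hab) hab
  linarith

theorem mul_cos_le_sin {y : ℝ} (hy0 : 0 ≤ y) (hy : y ≤ π / 2) : y * cos y ≤ sin y := by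
  rcases hy.lt_or_eq with hy | rfl
  · have hcos : 0 < cos y := cos_pos_of_mem_Ioo ⟨by linarith [pi_pos], hy⟩
    have := le_tan hy0 hy
    rwa [tan_eq_sin_div_cos, le_div_iff₀ hcos] at this
  · simp

theorem sin_mul_pi_sub_le_two {a : ℝ} (ha0 : 0 ≤ a) (ha : a ≤ π / 2) :
    sin a * (π - a) ≤ 2 := by
  have h := mul_cos_le_sin (y := π / 2 - a) (by linarith) (by linarith)
  rw [cos_pi_div_two_sub, sin_pi_div_two_sub] at h
  have hS : (cos a + π / 2 * sin a) ^ 2 < 2 ^ 2 := by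
    have hπ : π ^ 2 < 12 := by nlinarith [pi_lt_d2, pi_pos]
    nlinarith [sin_sq_add_cos_sq a, sq_nonneg (sin a - π / 2 * cos a)]
  nlinarith [abs_lt_of_sq_lt_sq hS zero_le_two]

theorem sin_mul_sub_le_one_sub_cos {a u : ℝ} (ha0 : 0 ≤ a) (ha : a ≤ π / 2) (hau : a ≤ u)
    (hu : u ≤ π) : sin a * (u - a) ≤ 1 - cos u := by
  rcases le_total u (π - a) with hu' | hu'
  · have := mul_sub_le_cos_sub_cos hau fun x hx => by
      rcases le_total x (π / 2) with hx' | hx'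
      · exact sin_le_sin_of_le_of_le_pi_div_two (by linarith) hx' hx.1.le
      · rw [← sin_pi_sub x]
        exact sin_le_sin_of_le_of_le_pi_div_two (by linarith) (by linarith) (by linarith [hx.2])
    linarith [cos_le_one a]
  · have := cos_sub_cos_le_mul_sub hu fun x hx => by
      rw [← sin_pi_sub x]
      exact sin_le_sin_of_le_of_le_pi_div_two (by linarith [hx.2]) ha (by linarith [hx.1])
    rw [cos_pi] at this
    nlinarith [sin_mul_pi_sub_le_two ha0 ha]

theorem two_mul_sin_mul_cos_sub_one_le_fFun {θ a η : ℝ} (hθ : 0 ≤ θ) (ha0 : 0 ≤ a)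
    (ha : a ≤ π / 2) (hη0 : 0 ≤ η) (hη : η ≤ (π - θ) / 2) :
    2 * sin a * cos ((θ + a) / 2) - 1 ≤ fFun θ (sin a) η := by
  set u := π - θ - 2 * η with hu
  have hcos : cos (θ + 2 * η) = -cos u := by rw [← cos_pi_sub, hu]; ring_nf
  have hsin : cos ((θ + a) / 2) = sin ((π - θ - a) / 2) := by
    rw [← cos_pi_div_two_sub]; ring_nf
  have hsa : 0 ≤ sin a := sin_nonneg_of_nonneg_of_le_pi ha0 (by linarith [pi_pos])
  rw [fFun, hcos, hsin]
  rcases le_total u a with hua | hau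
  · have := sin_le_sin_of_le_of_le_pi_div_two (x := (π - θ - a) / 2) (y := η) (by linarith)
      (by linarith) (by linarith)
    nlinarith [cos_le_one u]
  · have hlip : sin ((π - θ - a) / 2) - sin η ≤ (u - a) / 2 := by
      have := abs_sin_sub_sin_le ((π - θ - a) / 2) η
      rw [abs_of_nonneg (show 0 ≤ (π - θ - a) / 2 - η by linarith)] at this
      linarith [le_abs_self (sin ((π - θ - a) / 2) - sin η)]
    have := sin_mul_sub_le_one_sub_cos ha0 ha hau (by linarith)
    nlinarith

theorem le_kappaFun {Λ θ m : ℝ} (hθ : θ ≤ π)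
    (h : ∀ η ∈ Icc 0 ((π - θ) / 2), m ≤ fFun θ Λ η) : m ≤ kappaFun Λ θ :=
  le_csInf ((nonempty_Icc.2 (by linarith)).image _) (forall_mem_image.2 h)

theorem stmt14 (Λ θ : ℝ) (hΛ0 : 0 < Λ) (hΛ1 : Λ ≤ 1)
    (hθ0 : 0 < θ) (hθ : θ < Real.pi - Real.arcsin Λ) :
    1 + kappaFun Λ θ ≥ 2 * Λ * Real.cos ((θ + Real.arcsin Λ) / 2) := by
  have ha0 : 0 ≤ arcsin Λ := arcsin_nonneg.2 hΛ0.le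
  have hsin : sin (arcsin Λ) = Λ := sin_arcsin (by linarith) hΛ1
  have := le_kappaFun (Λ := Λ) (by linarith) fun η hη => hsin ▸
    two_mul_sin_mul_cos_sub_one_le_fFun hθ0.le ha0 (arcsin_le_pi_div_two Λ) hη.1 hη.2
  linarith
end
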